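/- Let u : I × ℝ² → ℝ be a classical solution of the hyperelastic compressible plate equation (u_t − u_{xxt} + 3 u u_x − γ(2 u_x u_{xx} + u u_{xxx}))_x − α u_{yy} + β u_{xxyy} = 0 (with parameters α, β, γ ∈ [0,∞)), which is the unique solution with initial datum u(0,·,·) = u₀, and which is nontrivial in the sense that L∂_x u is not identically zero, where Lf := ∂_x(1 − ∂_x²)f. If u is x-symmetric with axis of symmetry λ ∈ C¹(ℝ), then u is steady in the x-direction with speed c = λ̇(0); that is, u(t,x,y) = u₀(x − λ̇(0) t, y) for all (t,x,y) ∈ I × ℝ². -/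

import Mathlib

open Set

/-- Partial derivative in the time variable `t` of a function `u(t,x,y)`. -/
noncomputable def pt (u : ℝ → ℝ → ℝ → ℝ) : ℝ → ℝ → ℝ → ℝ :=
  fun t x y => deriv (fun s => u s x y) t

/-- Partial derivative in the horizontal variable `x` of a function `u(t,x,y)`. -/
noncomputable def px (u : ℝ → ℝ → ℝ → ℝ) : ℝ → ℝ → ℝ → ℝ :=
  fun t x y => deriv (fun s => u t s y) x

/-- Partial derivative in the transversal variable `y` of a function `u(t,x,y)`. -/
noncomputable def py (u : ℝ → ℝ → ℝ → ℝ) : ℝ → ℝ → ℝ → ℝ :=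
  fun t x y => deriv (fun s => u t x s) y

/-- The operator `L f = ∂ₓ(1 - ∂ₓ²) f = fₓ - fₓₓₓ`, acting in the `x`-variable. -/
noncomputable def Lx (u : ℝ → ℝ → ℝ → ℝ) : ℝ → ℝ → ℝ → ℝ :=
  fun t x y => px u t x y - px (px (px u)) t x y

/-- `u` is a (classical) solution on `[0,T] × ℝ²` of the hyperelastic compressible
plate equation `(uₜ - uₓₓₜ + 3 u uₓ - γ(2 uₓ uₓₓ + u uₓₓₓ))ₓ - α u_yy + β u_xxyy = 0`. -/
def IsClassicalSolHCP (T α β γ : ℝ) (u : ℝ → ℝ → ℝ → ℝ) : Prop :=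
  ∀ t ∈ Icc (0:ℝ) T, ∀ x y : ℝ,
    px (fun t x y => pt u t x y - px (px (pt u)) t x y + 3 * u t x y * px u t x y
        - γ * (2 * px u t x y * px (px u) t x y + u t x y * px (px (px u)) t x y)) t x y
      - α * py (py u) t x y + β * px (px (py (py u))) t x y = 0

section Aux

variable {w : ℝ → ℝ → ℝ → ℝ}

private lemma hasDerivAt_T (hw : ContDiff ℝ (⊤ : ℕ∞) (fun p : ℝ × ℝ × ℝ => w p.1 p.2.1 p.2.2))
    (t x y : ℝ) :
    HasDerivAt (fun s => w s x y)
      (fderiv ℝ (fun p : ℝ × ℝ × ℝ => w p.1 p.2.1 p.2.2) (t, x, y) (1, 0, 0)) t := by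
  have hU := (hw.differentiable (by simp) (t, x, y)).hasFDerivAt
  have hφ : HasDerivAt (fun s : ℝ => ((s, x, y) : ℝ × ℝ × ℝ)) ((1 : ℝ), (0 : ℝ), (0 : ℝ)) t :=
    (hasDerivAt_id t).prodMk ((hasDerivAt_const t x).prodMk (hasDerivAt_const t y))
  exact hU.comp_hasDerivAt t hφ

private lemma hasDerivAt_X (hw : ContDiff ℝ (⊤ : ℕ∞) (fun p : ℝ × ℝ × ℝ => w p.1 p.2.1 p.2.2))
    (t x y : ℝ) :
    HasDerivAt (fun s => w t s y)
      (fderiv ℝ (fun p : ℝ × ℝ × ℝ => w p.1 p.2.1 p.2.2) (t, x, y) (0, 1, 0)) x := by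
  have hU := (hw.differentiable (by simp) (t, x, y)).hasFDerivAt
  have hφ : HasDerivAt (fun s : ℝ => ((t, s, y) : ℝ × ℝ × ℝ)) ((0 : ℝ), (1 : ℝ), (0 : ℝ)) x :=
    (hasDerivAt_const x t).prodMk ((hasDerivAt_id x).prodMk (hasDerivAt_const x y))
  exact hU.comp_hasDerivAt x hφ

private lemma hasDerivAt_Y (hw : ContDiff ℝ (⊤ : ℕ∞) (fun p : ℝ × ℝ × ℝ => w p.1 p.2.1 p.2.2))
    (t x y : ℝ) :
    HasDerivAt (fun s => w t x s)
      (fderiv ℝ (fun p : ℝ × ℝ × ℝ => w p.1 p.2.1 p.2.2) (t, x, y) (0, 0, 1)) y := by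
  have hU := (hw.differentiable (by simp) (t, x, y)).hasFDerivAt
  have hφ : HasDerivAt (fun s : ℝ => ((t, x, s) : ℝ × ℝ × ℝ)) ((0 : ℝ), (0 : ℝ), (1 : ℝ)) y :=
    (hasDerivAt_const y t).prodMk ((hasDerivAt_const y x).prodMk (hasDerivAt_id y))
  exact hU.comp_hasDerivAt y hφ

private lemma smooth_fderiv_apply (hw : ContDiff ℝ (⊤ : ℕ∞) (fun p : ℝ × ℝ × ℝ => w p.1 p.2.1 p.2.2))
    (e : ℝ × ℝ × ℝ) :
    ContDiff ℝ (⊤ : ℕ∞) (fun p : ℝ × ℝ × ℝ =>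
      fderiv ℝ (fun p : ℝ × ℝ × ℝ => w p.1 p.2.1 p.2.2) p e) :=
  (hw.fderiv_right (mod_cast le_top)).clm_apply contDiff_const

lemma smooth_pt (hw : ContDiff ℝ (⊤ : ℕ∞) (fun p : ℝ × ℝ × ℝ => w p.1 p.2.1 p.2.2)) :
    ContDiff ℝ (⊤ : ℕ∞) (fun p : ℝ × ℝ × ℝ => pt w p.1 p.2.1 p.2.2) := by
  have h : (fun p : ℝ × ℝ × ℝ => pt w p.1 p.2.1 p.2.2)
      = fun p : ℝ × ℝ × ℝ =>
        fderiv ℝ (fun p : ℝ × ℝ × ℝ => w p.1 p.2.1 p.2.2) p (1, 0, 0) :=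
    funext fun p => (hasDerivAt_T hw p.1 p.2.1 p.2.2).deriv
  rw [h]; exact smooth_fderiv_apply hw _

lemma smooth_px (hw : ContDiff ℝ (⊤ : ℕ∞) (fun p : ℝ × ℝ × ℝ => w p.1 p.2.1 p.2.2)) :
    ContDiff ℝ (⊤ : ℕ∞) (fun p : ℝ × ℝ × ℝ => px w p.1 p.2.1 p.2.2) := by
  have h : (fun p : ℝ × ℝ × ℝ => px w p.1 p.2.1 p.2.2)
      = fun p : ℝ × ℝ × ℝ =>
        fderiv ℝ (fun p : ℝ × ℝ × ℝ => w p.1 p.2.1 p.2.2) p (0, 1, 0) :=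
    funext fun p => (hasDerivAt_X hw p.1 p.2.1 p.2.2).deriv
  rw [h]; exact smooth_fderiv_apply hw _

lemma smooth_py (hw : ContDiff ℝ (⊤ : ℕ∞) (fun p : ℝ × ℝ × ℝ => w p.1 p.2.1 p.2.2)) :
    ContDiff ℝ (⊤ : ℕ∞) (fun p : ℝ × ℝ × ℝ => py w p.1 p.2.1 p.2.2) := by
  have h : (fun p : ℝ × ℝ × ℝ => py w p.1 p.2.1 p.2.2)
      = fun p : ℝ × ℝ × ℝ =>
        fderiv ℝ (fun p : ℝ × ℝ × ℝ => w p.1 p.2.1 p.2.2) p (0, 0, 1) :=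
    funext fun p => (hasDerivAt_Y hw p.1 p.2.1 p.2.2).deriv
  rw [h]; exact smooth_fderiv_apply hw _

lemma diffX (hw : ContDiff ℝ (⊤ : ℕ∞) (fun p : ℝ × ℝ × ℝ => w p.1 p.2.1 p.2.2)) (t y : ℝ) :
    Differentiable ℝ (fun s => w t s y) :=
  fun x => (hasDerivAt_X hw t x y).differentiableAt

lemma hasDerivAt_px' (hw : ContDiff ℝ (⊤ : ℕ∞) (fun p : ℝ × ℝ × ℝ => w p.1 p.2.1 p.2.2)) (t x y : ℝ) :
    HasDerivAt (fun s => w t s y) (px w t x y) x :=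
  ((hasDerivAt_X hw t x y).differentiableAt).hasDerivAt

lemma hasDerivAt_pt' (hw : ContDiff ℝ (⊤ : ℕ∞) (fun p : ℝ × ℝ × ℝ => w p.1 p.2.1 p.2.2)) (t x y : ℝ) :
    HasDerivAt (fun s => w s x y) (pt w t x y) t :=
  ((hasDerivAt_T hw t x y).differentiableAt).hasDerivAt

end Aux

section Refl

/-- even-type reflection: derivative picks up a sign. -/
lemma reflE {p q : ℝ → ℝ} {μ : ℝ} (h : ∀ x, p x = q (2 * μ - x)) (x : ℝ) :
    deriv p x = -deriv q (2 * μ - x) := by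
  rw [show p = fun x => q (2 * μ - x) from funext h]
  exact deriv_comp_const_sub q (2 * μ) x

/-- odd-type reflection. -/
lemma reflO {p q : ℝ → ℝ} {μ : ℝ} (h : ∀ x, p x = -q (2 * μ - x)) (x : ℝ) :
    deriv p x = deriv q (2 * μ - x) := by
  rw [show p = fun x => -q (2 * μ - x) from funext h, deriv.fun_neg, deriv_comp_const_sub, neg_neg]

lemma reflP {p q r : ℝ → ℝ} {μ k : ℝ} (hq : Differentiable ℝ fun x => q (2 * μ - x))
    (hr : Differentiable ℝ r) (h : ∀ x, p x = q (2 * μ - x) + k * r x) (x : ℝ) :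
    deriv p x = -deriv q (2 * μ - x) + k * deriv r x := by
  rw [show p = fun x => q (2 * μ - x) + k * r x from funext h,
    deriv_fun_add (hq x) ((hr x).const_mul k), deriv_comp_const_sub, deriv_const_mul k (hr x)]

lemma reflM {p q r : ℝ → ℝ} {μ k : ℝ} (hq : Differentiable ℝ fun x => q (2 * μ - x))
    (hr : Differentiable ℝ r) (h : ∀ x, p x = -q (2 * μ - x) + k * r x) (x : ℝ) :
    deriv p x = deriv q (2 * μ - x) + k * deriv r x := by
  rw [show p = fun x => -q (2 * μ - x) + k * r x from funext h,
    deriv_fun_add (hq x).fun_neg ((hr x).const_mul k), deriv.fun_neg, deriv_comp_const_sub,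
    deriv_const_mul k (hr x), neg_neg]

lemma shiftA {p g : ℝ → ℝ} {a : ℝ} (h : ∀ x, p x = g (x - a)) (x : ℝ) :
    deriv p x = deriv g (x - a) := by
  rw [show p = fun x => g (x - a) from funext h]
  exact deriv_comp_sub_const g a x

end Refl

noncomputable def Rterm (γ : ℝ) (u : ℝ → ℝ → ℝ → ℝ) : ℝ → ℝ → ℝ → ℝ :=
  fun t x y => 3 * u t x y * px u t x y
    - γ * (2 * px u t x y * px (px u) t x y + u t x y * px (px (px u)) t x y)

lemma Rdiff_lemma (γ : ℝ) {u : ℝ → ℝ → ℝ → ℝ}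
    (hu : ContDiff ℝ (⊤ : ℕ∞) (fun p : ℝ × ℝ × ℝ => u p.1 p.2.1 p.2.2)) (t y : ℝ) :
    Differentiable ℝ (fun s => Rterm γ u t s y) := by
  have hpx_s := smooth_px hu
  have hpxpx_s := smooth_px hpx_s
  have hpxpxpx_s := smooth_px hpxpx_s
  have d0 := diffX hu t y
  have d1 := diffX hpx_s t y
  have d2 := diffX hpxpx_s t y
  have d3 := diffX hpxpxpx_s t y
  simp only [Rterm]
  exact ((d0.const_mul 3).mul d1).sub
    ((((d1.const_mul 2).mul d2).add (d0.mul d3)).const_mul γ)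

/-- The PDE, rewritten with the inner `x`-derivative distributed over the linear
(time-derivative) part and the nonlinear part. -/
lemma key_pde_lemma (T α β γ : ℝ) {u : ℝ → ℝ → ℝ → ℝ}
    (hu : ContDiff ℝ (⊤ : ℕ∞) (fun p : ℝ × ℝ × ℝ => u p.1 p.2.1 p.2.2))
    (heq : IsClassicalSolHCP T α β γ u) :
    ∀ t ∈ Icc (0:ℝ) T, ∀ x y : ℝ,
      (px (pt u) t x y - px (px (px (pt u))) t x y) + px (Rterm γ u) t x y
        = α * py (py u) t x y - β * px (px (py (py u))) t x y := by
  intro t ht x y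
  have hpt_s := smooth_pt hu
  have hpxpxpt_s := smooth_px (smooth_px hpt_s)
  have h := heq t ht x y
  have hQd : DifferentiableAt ℝ (fun s => pt u t s y - px (px (pt u)) t s y) x :=
    ((diffX hpt_s t y).sub (diffX hpxpxpt_s t y)) x
  have hsec : (fun s => pt u t s y - px (px (pt u)) t s y + 3 * u t s y * px u t s y
        - γ * (2 * px u t s y * px (px u) t s y + u t s y * px (px (px u)) t s y))
      = fun s => (pt u t s y - px (px (pt u)) t s y) + Rterm γ u t s y := by
    funext s; simp only [Rterm]; ring
  have h2 : deriv (fun s => pt u t s y - px (px (pt u)) t s y + 3 * u t s y * px u t s y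
        - γ * (2 * px u t s y * px (px u) t s y + u t s y * px (px (px u)) t s y)) x
      = (px (pt u) t x y - px (px (px (pt u))) t x y) + px (Rterm γ u) t x y := by
    rw [hsec, deriv_fun_add hQd ((Rdiff_lemma γ hu t y) x),
      deriv_fun_sub ((diffX hpt_s t y) x) ((diffX hpxpxpt_s t y) x)]
    rfl
  have h2' : px (fun t x y => pt u t x y - px (px (pt u)) t x y + 3 * u t x y * px u t x y
        - γ * (2 * px u t x y * px (px u) t x y + u t x y * px (px (px u)) t x y)) t x y
      = (px (pt u) t x y - px (px (px (pt u))) t x y) + px (Rterm γ u) t x y := h2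
  rw [h2'] at h
  linarith

/-- Key identity: by `x`-symmetry, at time `0` the `x`-derivative of the linear part
`uₜ - uₓₓₜ` equals `-λ̇(0) · (uₓₓ - uₓₓₓₓ)`. -/
lemma star_identity
    (T : ℝ) (hT : 0 < T) (α β γ : ℝ)
    (u : ℝ → ℝ → ℝ → ℝ)
    (hu : ContDiff ℝ (⊤ : ℕ∞) (fun p : ℝ × ℝ × ℝ => u p.1 p.2.1 p.2.2))
    (heq : IsClassicalSolHCP T α β γ u)
    (lam : ℝ → ℝ) (hlam : ContDiff ℝ 1 lam)
    (hsym : ∀ t ∈ Icc (0:ℝ) T, ∀ x y : ℝ, u t x y = u t (2 * lam t - x) y) :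
    ∀ x y : ℝ,
      px (pt u) 0 x y - px (px (px (pt u))) 0 x y
        = -(deriv lam 0) * (px (px u) 0 x y - px (px (px (px u))) 0 x y) := by
  have hmem : (0:ℝ) ∈ Icc (0:ℝ) T := ⟨le_refl 0, hT.le⟩
  have hpt_s := smooth_pt hu
  have hpx_s := smooth_px hu
  have hpxpx_s := smooth_px hpx_s
  have hpxpxpx_s := smooth_px hpxpx_s
  have hpxpt_s := smooth_px hpt_s
  have hpxpxpt_s := smooth_px hpxpt_s
  have hrefl : Differentiable ℝ (fun x : ℝ => 2 * lam 0 - x) :=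
    differentiable_id.const_sub _
  have hsym0 : ∀ x y : ℝ, u 0 x y = u 0 (2 * lam 0 - x) y := fun x y => hsym 0 hmem x y
  -- parity chains in x at time 0
  have O1 : ∀ x y : ℝ, px u 0 x y = -px u 0 (2 * lam 0 - x) y :=
    fun x y => reflE (fun x' => hsym0 x' y) x
  have E2 : ∀ x y : ℝ, px (px u) 0 x y = px (px u) 0 (2 * lam 0 - x) y :=
    fun x y => reflO (fun x' => O1 x' y) x
  have O3 : ∀ x y : ℝ, px (px (px u)) 0 x y = -px (px (px u)) 0 (2 * lam 0 - x) y :=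
    fun x y => reflE (fun x' => E2 x' y) x
  have EY : ∀ x y : ℝ, py u 0 x y = py u 0 (2 * lam 0 - x) y := by
    intro x y
    show deriv (fun s => u 0 x s) y = deriv (fun s => u 0 (2 * lam 0 - x) s) y
    rw [show (fun s => u 0 x s) = fun s => u 0 (2 * lam 0 - x) s from
      funext fun s => hsym0 x s]
  have EYY : ∀ x y : ℝ, py (py u) 0 x y = py (py u) 0 (2 * lam 0 - x) y := by
    intro x y
    show deriv (fun s => py u 0 x s) y = deriv (fun s => py u 0 (2 * lam 0 - x) s) y
    rw [show (fun s => py u 0 x s) = fun s => py u 0 (2 * lam 0 - x) s from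
      funext fun s => EY x s]
  have OXYY : ∀ x y : ℝ, px (py (py u)) 0 x y = -px (py (py u)) 0 (2 * lam 0 - x) y :=
    fun x y => reflE (fun x' => EYY x' y) x
  have EXXYY : ∀ x y : ℝ,
      px (px (py (py u))) 0 x y = px (px (py (py u))) 0 (2 * lam 0 - x) y :=
    fun x y => reflO (fun x' => OXYY x' y) x
  -- time-derivative identity from differentiating the symmetry in t at t = 0
  have A0' : ∀ x y : ℝ, pt u 0 x y
      = pt u 0 (2 * lam 0 - x) y + (-(2 * deriv lam 0)) * px u 0 x y := by
    intro x y
    have hlam0 : HasDerivAt lam (deriv lam 0) 0 :=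
      ((hlam.differentiable one_ne_zero) 0).hasDerivAt
    have hφ : HasDerivAt (fun s : ℝ => ((s, 2 * lam s - x, y) : ℝ × ℝ × ℝ))
        ((1 : ℝ), 2 * deriv lam 0, (0 : ℝ)) 0 :=
      (hasDerivAt_id 0).prodMk (((hlam0.const_mul 2).sub_const x).prodMk (hasDerivAt_const 0 y))
    have hU := (hu.differentiable (by simp) ((0 : ℝ), 2 * lam 0 - x, y)).hasFDerivAt
    have hF2 : HasDerivAt (fun s => u s (2 * lam s - x) y)
        (fderiv ℝ (fun p : ℝ × ℝ × ℝ => u p.1 p.2.1 p.2.2) (0, 2 * lam 0 - x, y)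
          (1, 2 * deriv lam 0, 0)) 0 := by
      have h := hU.comp_hasDerivAt 0 hφ
      simpa [Function.comp_def] using h
    have h1 : HasDerivWithinAt (fun s => u s x y) (pt u 0 x y) (Icc (0:ℝ) T) 0 :=
      (hasDerivAt_pt' hu 0 x y).hasDerivWithinAt
    have h2 : HasDerivWithinAt (fun s => u s x y)
        (fderiv ℝ (fun p : ℝ × ℝ × ℝ => u p.1 p.2.1 p.2.2) (0, 2 * lam 0 - x, y)
          (1, 2 * deriv lam 0, 0)) (Icc (0:ℝ) T) 0 :=
      (hF2.hasDerivWithinAt).congr (fun s hs => hsym s hs x y) (hsym 0 hmem x y)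
    have huq := UniqueDiffWithinAt.eq_deriv _ ((uniqueDiffOn_Icc hT) 0 hmem) h1 h2
    have hsplit : ((1 : ℝ), (2 * deriv lam 0 : ℝ), (0 : ℝ))
        = ((1:ℝ), (0:ℝ), (0:ℝ)) + (2 * deriv lam 0) • ((0:ℝ), (1:ℝ), (0:ℝ)) := by
      simp
    have hvec : fderiv ℝ (fun p : ℝ × ℝ × ℝ => u p.1 p.2.1 p.2.2) (0, 2 * lam 0 - x, y)
        ((1 : ℝ), (2 * deriv lam 0 : ℝ), (0 : ℝ))
        = pt u 0 (2 * lam 0 - x) y + (2 * deriv lam 0) * px u 0 (2 * lam 0 - x) y := by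
      rw [hsplit, map_add, map_smul, smul_eq_mul,
        ← (hasDerivAt_T hu 0 (2 * lam 0 - x) y).deriv,
        ← (hasDerivAt_X hu 0 (2 * lam 0 - x) y).deriv]
      rfl
    rw [hvec] at huq
    linear_combination huq + (2 * deriv lam 0) * O1 x y
  -- chain of reflected identities for the time-derivative part
  have P1 : ∀ x y : ℝ, px (pt u) 0 x y
      = -px (pt u) 0 (2 * lam 0 - x) y + (-(2 * deriv lam 0)) * px (px u) 0 x y :=
    fun x y => reflP ((diffX hpt_s 0 y).comp hrefl) (diffX hpx_s 0 y)
      (fun x' => A0' x' y) x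
  have P2 : ∀ x y : ℝ, px (px (pt u)) 0 x y
      = px (px (pt u)) 0 (2 * lam 0 - x) y
        + (-(2 * deriv lam 0)) * px (px (px u)) 0 x y :=
    fun x y => reflM ((diffX hpxpt_s 0 y).comp hrefl) (diffX hpxpx_s 0 y)
      (fun x' => P1 x' y) x
  have P3 : ∀ x y : ℝ, px (px (px (pt u))) 0 x y
      = -px (px (px (pt u))) 0 (2 * lam 0 - x) y
        + (-(2 * deriv lam 0)) * px (px (px (px u))) 0 x y :=
    fun x y => reflP ((diffX hpxpxpt_s 0 y).comp hrefl) (diffX hpxpxpx_s 0 y)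
      (fun x' => P2 x' y) x
  -- the nonlinear term is odd, so its x-derivative is even
  have Rodd : ∀ x y : ℝ, Rterm γ u 0 x y = -Rterm γ u 0 (2 * lam 0 - x) y := by
    intro x y
    have e0 := hsym0 x y
    have o1 := O1 x y
    have e2 := E2 x y
    have o3 := O3 x y
    simp only [Rterm]
    rw [e0, o1, e2, o3]
    ring
  have Reven : ∀ x y : ℝ, px (Rterm γ u) 0 x y = px (Rterm γ u) 0 (2 * lam 0 - x) y :=
    fun x y => reflO (fun x' => Rodd x' y) x
  have key_pde := key_pde_lemma T α β γ hu heq 0 hmem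
  -- evenness of the x-derivative of the linear part, from the PDE
  have LQeven : ∀ x y : ℝ,
      px (pt u) 0 x y - px (px (px (pt u))) 0 x y
        = px (pt u) 0 (2 * lam 0 - x) y - px (px (px (pt u))) 0 (2 * lam 0 - x) y := by
    intro x y
    linear_combination (key_pde x y) - (key_pde (2 * lam 0 - x) y) - (Reven x y)
      + α * (EYY x y) - β * (EXXYY x y)
  intro x y
  linear_combination (P1 x y - P3 x y + LQeven x y) / 2

/-- Given the key identity, the shifted initial profile is itself a classical solution. -/
lemma shifted_is_solution
    (T : ℝ) (hT : 0 < T) (α β γ c : ℝ)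
    (u : ℝ → ℝ → ℝ → ℝ)
    (hu : ContDiff ℝ (⊤ : ℕ∞) (fun p : ℝ × ℝ × ℝ => u p.1 p.2.1 p.2.2))
    (heq : IsClassicalSolHCP T α β γ u)
    (hstar : ∀ x y : ℝ, px (pt u) 0 x y - px (px (px (pt u))) 0 x y
        = -c * (px (px u) 0 x y - px (px (px (px u))) 0 x y)) :
    IsClassicalSolHCP T α β γ (fun t x y => u 0 (x - c * t) y) := by
  have hmem : (0:ℝ) ∈ Icc (0:ℝ) T := ⟨le_refl 0, hT.le⟩
  have hpx_s := smooth_px hu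
  have hpxpx_s := smooth_px hpx_s
  have hpxpxpx_s := smooth_px hpxpx_s
  set V : ℝ → ℝ → ℝ → ℝ := fun t x y => u 0 (x - c * t) y with hVdef
  have hv0 : ∀ t x y : ℝ, V t x y = u 0 (x - c * t) y := fun _ _ _ => rfl
  have hvx : ∀ t x y : ℝ, px V t x y = px u 0 (x - c * t) y := fun t x y =>
    shiftA (p := fun s => V t s y) (g := fun z => u 0 z y) (fun s => rfl) x
  have hvxx : ∀ t x y : ℝ, px (px V) t x y = px (px u) 0 (x - c * t) y := fun t x y =>
    shiftA (p := fun s => px V t s y) (g := fun z => px u 0 z y) (fun s => hvx t s y) x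
  have hvxxx : ∀ t x y : ℝ, px (px (px V)) t x y = px (px (px u)) 0 (x - c * t) y :=
    fun t x y =>
    shiftA (p := fun s => px (px V) t s y) (g := fun z => px (px u) 0 z y)
      (fun s => hvxx t s y) x
  have hvyy : ∀ t x y : ℝ, py (py V) t x y = py (py u) 0 (x - c * t) y := fun _ _ _ => rfl
  have hvxyy : ∀ t x y : ℝ, px (py (py V)) t x y = px (py (py u)) 0 (x - c * t) y :=
    fun t x y =>
    shiftA (p := fun s => py (py V) t s y) (g := fun z => py (py u) 0 z y)
      (fun s => hvyy t s y) x
  have hvxxyy : ∀ t x y : ℝ,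
      px (px (py (py V))) t x y = px (px (py (py u))) 0 (x - c * t) y := fun t x y =>
    shiftA (p := fun s => px (py (py V)) t s y) (g := fun z => px (py (py u)) 0 z y)
      (fun s => hvxyy t s y) x
  have hvt : ∀ t x y : ℝ, pt V t x y = -c * px u 0 (x - c * t) y := by
    intro t x y
    have hg : HasDerivAt (fun z => u 0 z y) (px u 0 (x - c * t) y) (x - c * t) :=
      hasDerivAt_px' hu 0 (x - c * t) y
    have hi : HasDerivAt (fun s : ℝ => x - c * s) (-c) t := by
      simpa using ((hasDerivAt_id t).const_mul c).const_sub x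
    have h := hg.comp t hi
    have h2 : pt V t x y = px u 0 (x - c * t) y * (-c) := by
      have h3 : deriv (fun s : ℝ => u 0 (x - c * s) y) t = px u 0 (x - c * t) y * (-c) := by
        simpa [Function.comp_def] using h.deriv
      exact h3
    rw [h2]; ring
  have hvxt : ∀ t x y : ℝ, px (pt V) t x y = -c * px (px u) 0 (x - c * t) y := by
    intro t x y
    have h1 : px (pt V) t x y = deriv (fun z => -c * px u 0 z y) (x - c * t) :=
      shiftA (p := fun s => pt V t s y) (g := fun z => -c * px u 0 z y)
        (fun s => hvt t s y) x
    rw [h1, deriv_const_mul _ ((diffX hpx_s 0 y) (x - c * t))]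
    rfl
  have hvxxt : ∀ t x y : ℝ, px (px (pt V)) t x y = -c * px (px (px u)) 0 (x - c * t) y := by
    intro t x y
    have h1 : px (px (pt V)) t x y = deriv (fun z => -c * px (px u) 0 z y) (x - c * t) :=
      shiftA (p := fun s => px (pt V) t s y) (g := fun z => -c * px (px u) 0 z y)
        (fun s => hvxt t s y) x
    rw [h1, deriv_const_mul _ ((diffX hpxpx_s 0 y) (x - c * t))]
    rfl
  intro t ht x y
  have hsecW : (fun s => pt V t s y - px (px (pt V)) t s y + 3 * V t s y * px V t s y
        - γ * (2 * px V t s y * px (px V) t s y + V t s y * px (px (px V)) t s y))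
      = fun s => -c * (px u 0 (s - c * t) y - px (px (px u)) 0 (s - c * t) y)
          + Rterm γ u 0 (s - c * t) y := by
    funext s
    rw [hvt t s y, hvxxt t s y, hv0 t s y, hvx t s y, hvxx t s y, hvxxx t s y]
    simp only [Rterm]
    ring
  have houter : px (fun t x y => pt V t x y - px (px (pt V)) t x y + 3 * V t x y * px V t x y
        - γ * (2 * px V t x y * px (px V) t x y + V t x y * px (px (px V)) t x y)) t x y
      = deriv (fun z => -c * (px u 0 z y - px (px (px u)) 0 z y) + Rterm γ u 0 z y)
          (x - c * t) := by
    have h1 := congrArg (fun f : ℝ → ℝ => deriv f x) hsecW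
    exact h1.trans (deriv_comp_sub_const
      (fun z => -c * (px u 0 z y - px (px (px u)) 0 z y) + Rterm γ u 0 z y) (c * t) x)
  have hW : deriv (fun z => -c * (px u 0 z y - px (px (px u)) 0 z y) + Rterm γ u 0 z y)
        (x - c * t)
      = -c * (px (px u) 0 (x - c * t) y - px (px (px (px u))) 0 (x - c * t) y)
        + px (Rterm γ u) 0 (x - c * t) y := by
    rw [deriv_fun_add ((((diffX hpx_s 0 y).fun_sub (diffX hpxpxpx_s 0 y)).const_mul (-c)) (x - c * t))
        ((Rdiff_lemma γ hu 0 y) (x - c * t)),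
      deriv_const_mul _ (((diffX hpx_s 0 y).fun_sub (diffX hpxpxpx_s 0 y)) (x - c * t)),
      deriv_fun_sub ((diffX hpx_s 0 y) (x - c * t)) ((diffX hpxpxpx_s 0 y) (x - c * t))]
    rfl
  have hkey := key_pde_lemma T α β γ hu heq 0 hmem (x - c * t) y
  have hstar' := hstar (x - c * t) y
  rw [houter, hW, hvyy t x y, hvxxyy t x y]
  linear_combination hkey - hstar'


/-- An `x`-symmetric classical solution of the hyperelastic compressible plate equation,
which is the unique solution with its initial datum and has `L ∂ₓ u` not identically zero,
is steady in the `x`-direction with speed `λ̇(0)`. -/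
theorem hcp_xSymmetric_implies_steady
    (T : ℝ) (hT : 0 < T) (α β γ : ℝ) (hα : 0 ≤ α) (hβ : 0 ≤ β) (hγ : 0 ≤ γ)
    (u : ℝ → ℝ → ℝ → ℝ) (u₀ : ℝ → ℝ → ℝ)
    (hu : ContDiff ℝ (⊤ : ℕ∞) (fun p : ℝ × ℝ × ℝ => u p.1 p.2.1 p.2.2))
    (heq : IsClassicalSolHCP T α β γ u)
    (hinit : ∀ x y : ℝ, u 0 x y = u₀ x y)
    (huniq : ∀ v : ℝ → ℝ → ℝ → ℝ,
      ContDiff ℝ (⊤ : ℕ∞) (fun p : ℝ × ℝ × ℝ => v p.1 p.2.1 p.2.2) →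
      IsClassicalSolHCP T α β γ v → (∀ x y : ℝ, v 0 x y = u₀ x y) →
      ∀ t ∈ Icc (0:ℝ) T, ∀ x y : ℝ, v t x y = u t x y)
    (hnontriv : ¬ (∀ t ∈ Icc (0:ℝ) T, ∀ x y : ℝ, Lx (px u) t x y = 0))
    (lam : ℝ → ℝ) (hlam : ContDiff ℝ 1 lam)
    (hsym : ∀ t ∈ Icc (0:ℝ) T, ∀ x y : ℝ, u t x y = u t (2 * lam t - x) y) :
    ∀ t ∈ Icc (0:ℝ) T, ∀ x y : ℝ, u t x y = u₀ (x - deriv lam 0 * t) y := by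
  have hstar := star_identity T hT α β γ u hu heq lam hlam hsym
  have hsol := shifted_is_solution T hT α β γ (deriv lam 0) u hu heq hstar
  have hv1 : ContDiff ℝ (⊤ : ℕ∞) (fun p : ℝ × ℝ × ℝ => u 0 (p.2.1 - deriv lam 0 * p.1) p.2.2) := by
    have hg : ContDiff ℝ (⊤ : ℕ∞) (fun p : ℝ × ℝ × ℝ =>
        (((0:ℝ), p.2.1 - deriv lam 0 * p.1, p.2.2) : ℝ × ℝ × ℝ)) := by
      refine ContDiff.prodMk contDiff_const (ContDiff.prodMk ?_ ?_)
      · exact (contDiff_fst.comp contDiff_snd).sub (contDiff_const.mul contDiff_fst)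
      · exact contDiff_snd.comp contDiff_snd
    exact hu.comp hg
  have hv3 : ∀ x y : ℝ, u 0 (x - deriv lam 0 * 0) y = u₀ x y := by
    intro x y
    rw [mul_zero, sub_zero]
    exact hinit x y
  intro t ht x y
  have h := huniq (fun t x y => u 0 (x - deriv lam 0 * t) y) hv1 hsol hv3 t ht x y
  have h' : u t x y = u 0 (x - deriv lam 0 * t) y := h.symm
  rw [h']
  exact hinit _ _
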